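/- If ξ, ξ' ∈ S_{q,u} and ξξ' is irrational, then ξξ' ∈ S_{q,u}. -/

import Mathlib

open Filter

/-- Distance from a real number to the nearest integer. -/
noncomputable def distNearestInt (x : ℝ) : ℝ := |x - round x|

/-- The Liouville set `S_{q,u}` attached to a sequence `q` of positive integers and a
sequence `u` of positive reals. -/
def LSet (q : ℕ → ℕ) (u : ℕ → ℝ) : Set ℝ :=
  {ξ : ℝ | Irrational ξ ∧ ∃ κ₁ κ₂ : ℝ, 0 < κ₁ ∧ 0 < κ₂ ∧ ∃ b : ℕ → ℕ,
    ∀ᶠ n in Filter.atTop, 1 ≤ b n ∧ (b n : ℝ) ≤ (q n : ℝ) ^ κ₁ ∧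
      distNearestInt ((b n : ℝ) * ξ) ≤ (q n : ℝ) ^ (-(κ₂ * u n))}

/-! If `x = a + δ` and `y = a' + δ'` with `a, a'` the nearest integers, then
`x y - a a' = x δ' + a' δ`; the smallness of `‖b ξ‖` and `‖b' ξ'‖` thus passes to
`‖b b' ξ ξ'‖` at the cost of a factor `C q_n^{κ₁ + κ₁'}`, which is absorbed by halving
the smaller of the two exponents `κ₂` since `u n → ∞`. -/

theorem distNearestInt_nonneg (x : ℝ) : 0 ≤ distNearestInt x :=
  abs_nonneg _

theorem distNearestInt_le_abs_sub_intCast (x : ℝ) (m : ℤ) : distNearestInt x ≤ |x - m| :=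
  round_le x m

theorem distNearestInt_mul_le (x y : ℝ) :
    distNearestInt (x * y) ≤ |x| * distNearestInt y + (|y| + 1) * distNearestInt x := by
  set δ := x - round x
  set δ' := y - round y
  have hround : |(round y : ℝ)| ≤ |y| + 1 := by
    have := abs_sub_round y
    have := abs_sub_abs_le_abs_sub (round y : ℝ) y
    rw [abs_sub_comm] at this
    linarith
  calc distNearestInt (x * y) ≤ |x * y - (round x * round y : ℤ)| :=
        distNearestInt_le_abs_sub_intCast _ _
    _ = |x * δ' + round y * δ| := by push_cast [δ, δ']; ring_nf
    _ ≤ |x| * |δ'| + |(round y : ℝ)| * |δ| := by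
        rw [← abs_mul, ← abs_mul]; exact abs_add_le _ _
    _ ≤ |x| * distNearestInt y + (|y| + 1) * distNearestInt x := by
        unfold distNearestInt; gcongr

theorem distNearestInt_mul_mul_le {b b' ξ ξ' P E : ℝ} (hb₀ : 0 ≤ b) (hb'₀ : 0 ≤ b')
    (hb : b ≤ P) (hb' : b' ≤ P) (hP : 1 ≤ P)
    (hx : distNearestInt (b * ξ) ≤ E) (hy : distNearestInt (b' * ξ') ≤ E) :
    distNearestInt (b * b' * (ξ * ξ')) ≤ (|ξ| + |ξ'| + 1) * P * E := by
  have hE : 0 ≤ E := (distNearestInt_nonneg _).trans hx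
  calc distNearestInt (b * b' * (ξ * ξ'))
      = distNearestInt ((b * ξ) * (b' * ξ')) := by ring_nf
    _ ≤ |b * ξ| * distNearestInt (b' * ξ') + (|b' * ξ'| + 1) * distNearestInt (b * ξ) :=
        distNearestInt_mul_le _ _
    _ ≤ (P * |ξ|) * E + (P * |ξ'| + P) * E := by
        rw [abs_mul, abs_mul, abs_of_nonneg hb₀, abs_of_nonneg hb'₀]
        gcongr <;> apply distNearestInt_nonneg
    _ = (|ξ| + |ξ'| + 1) * P * E := by ring

theorem eventually_mul_rpow_mul_rpow_neg_le {ι : Type*} {l : Filter ι} {Q u : ι → ℝ}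
    (C K : ℝ) {κ : ℝ} (hκ : 0 < κ) (hQ : ∀ᶠ i in l, 2 ≤ Q i) (hu : Tendsto u l atTop) :
    ∀ᶠ i in l, C * Q i ^ K * Q i ^ (-(κ * u i)) ≤ Q i ^ (-(κ / 2 * u i)) := by
  have ht : Tendsto (fun i ↦ κ / 2 * u i - K) l atTop :=
    tendsto_atTop_add_const_right _ _ (hu.const_mul_atTop (by positivity))
  have h2t := (tendsto_rpow_atTop_of_base_gt_one 2 one_lt_two).comp ht
  filter_upwards [hQ, ht.eventually_ge_atTop 0, h2t.eventually_ge_atTop C] with i hQi ht₀ hC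
  have hQpos : 0 < Q i := by linarith
  calc C * Q i ^ K * Q i ^ (-(κ * u i))
      ≤ Q i ^ (κ / 2 * u i - K) * Q i ^ K * Q i ^ (-(κ * u i)) := by
        gcongr
        exact hC.trans (Real.rpow_le_rpow zero_le_two hQi ht₀)
    _ = Q i ^ (-(κ / 2 * u i)) := by
        rw [← Real.rpow_add hQpos, ← Real.rpow_add hQpos]
        ring_nf

theorem LSet_mul_mem_general (q : ℕ → ℕ) (u : ℕ → ℝ)
    (hq : StrictMono q)
    (hu : Filter.Tendsto u Filter.atTop Filter.atTop)
    (ξ ξ' : ℝ) (hξ : ξ ∈ LSet q u) (hξ' : ξ' ∈ LSet q u)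
    (hirr : Irrational (ξ * ξ')) : ξ * ξ' ∈ LSet q u := by
  obtain ⟨-, κ₁, κ₂, hκ₁, hκ₂, b, hb⟩ := hξ
  obtain ⟨-, κ₁', κ₂', hκ₁', hκ₂', b', hb'⟩ := hξ'
  set κ := min κ₂ κ₂'
  have hκ : 0 < κ := lt_min hκ₂ hκ₂'
  have hq₂ : ∀ᶠ n in atTop, (2 : ℝ) ≤ q n := by
    filter_upwards [eventually_ge_atTop 2] with n hn
    exact_mod_cast hn.trans (hq.id_le n)
  refine ⟨hirr, κ₁ + κ₁', κ / 2, by positivity, by positivity, fun n ↦ b n * b' n, ?_⟩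
  filter_upwards [hb, hb', hq₂, hu.eventually_ge_atTop 0,
    eventually_mul_rpow_mul_rpow_neg_le (|ξ| + |ξ'| + 1) (κ₁ + κ₁') hκ hq₂ hu]
    with n ⟨hb₁, hbq, hbξ⟩ ⟨hb₁', hbq', hbξ'⟩ hqn hun hC
  have hq₁ : (1 : ℝ) ≤ q n := by linarith
  have hbP : (b n : ℝ) ≤ (q n : ℝ) ^ (κ₁ + κ₁') :=
    hbq.trans (Real.rpow_le_rpow_of_exponent_le hq₁ (by linarith))
  have hbP' : (b' n : ℝ) ≤ (q n : ℝ) ^ (κ₁ + κ₁') :=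
    hbq'.trans (Real.rpow_le_rpow_of_exponent_le hq₁ (by linarith))
  have hE : ∀ {k}, κ ≤ k → (q n : ℝ) ^ (-(k * u n)) ≤ (q n : ℝ) ^ (-(κ * u n)) := fun h ↦
    Real.rpow_le_rpow_of_exponent_le hq₁ (by nlinarith)
  refine ⟨Left.one_le_mul hb₁ hb₁', ?_, ?_⟩
  · push_cast
    rw [Real.rpow_add (by positivity)]
    gcongr
  · push_cast
    exact (distNearestInt_mul_mul_le (Nat.cast_nonneg _) (Nat.cast_nonneg _) hbP hbP'
      (Real.one_le_rpow hq₁ (by positivity)) (hbξ.trans (hE (min_le_left _ _)))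
      (hbξ'.trans (hE (min_le_right _ _)))).trans hC

/-- If ξ, ξ' ∈ S_{q,u} and ξξ' is irrational, then ξξ' ∈ S_{q,u}. -/
theorem LSet_mul_mem (q : ℕ → ℕ) (u : ℕ → ℝ)
    (hq : StrictMono q) (hqpos : ∀ n, 0 < q n)
    (hupos : ∀ n, 0 < u n) (hu : Filter.Tendsto u Filter.atTop Filter.atTop)
    (ξ ξ' : ℝ) (hξ : ξ ∈ LSet q u) (hξ' : ξ' ∈ LSet q u)
    (hirr : Irrational (ξ * ξ')) : ξ * ξ' ∈ LSet q u :=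
  LSet_mul_mem_general q u hq hu ξ ξ' hξ hξ' hirr
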